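/- arXiv:1310.6019 — 2 statements merged into one kernel-verified Lean document; each statement's English description precedes it below -/
import Mathlib

section
/- Let G be a finite simple graph on n vertices that has at least one edge and is not a complete graph, and let ζ be a surprise-optimal clustering of G. Then the number of clusters of ζ satisfies 1 < |ζ| < n. -/
open Finset

/-- The surprise value `S(p, m, i_p, i_e)`. -/
def surpriseVal (p m ip ie : ℕ) : ℚ :=
  (∑ i ∈ Finset.Icc ie m, (ip.choose i * (p - ip).choose (m - i) : ℚ)) / (p.choose m)

variable {V : Type*} [Fintype V] [DecidableEq V]

open scoped Classical in
/-- The number of edges of `G`. -/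
noncomputable def numEdges (G : SimpleGraph V) : ℕ := G.edgeFinset.card

open scoped Classical in
/-- The number of intracluster edges of the clustering `ζ`, i.e. of edges of `G`
having both endpoints in the same cluster. -/
noncomputable def intraEdges (G : SimpleGraph V) (ζ : Finpartition (univ : Finset V)) : ℕ :=
  (G.edgeFinset.filter fun e => ∃ P ∈ ζ.parts, ∀ v ∈ e, v ∈ P).card

open scoped Classical in
/-- The number of intercluster edges of the clustering `ζ`, i.e. of edges of `G`
whose endpoints lie in different clusters. -/
noncomputable def interEdges (G : SimpleGraph V) (ζ : Finpartition (univ : Finset V)) : ℕ :=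
  (G.edgeFinset.filter fun e => ¬ ∃ P ∈ ζ.parts, ∀ v ∈ e, v ∈ P).card

/-- The number of intracluster vertex pairs of the clustering `ζ`. -/
def intraPairs (ζ : Finpartition (univ : Finset V)) : ℕ :=
  ∑ P ∈ ζ.parts, (P.card).choose 2

/-- The surprise of the clustering `ζ` of the graph `G`. -/
noncomputable def surprise (G : SimpleGraph V) (ζ : Finpartition (univ : Finset V)) : ℚ :=
  surpriseVal ((Fintype.card V).choose 2) (numEdges G) (intraPairs ζ) (intraEdges G ζ)

/-!
Putting the two endpoints of one edge into a common cluster and every other vertex into a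
singleton gives `i_p = i_e = 1`, hence surprise `C(p - 1, m - 1) / C(p, m) = m / p < 1` when
`0 < m < p`. A clustering with one cluster has `i_p = p`, `i_e = m`, and one with `n` clusters
consists of singletons, so `i_p = i_e = 0`; in both cases the surprise is exactly `1`.
-/

open SimpleGraph

section SurpriseValue

variable {p m : ℕ}

lemma surpriseVal_self (hmp : m ≤ p) : surpriseVal p m p m = 1 := by
  have hpos : (p.choose m : ℚ) ≠ 0 := by exact_mod_cast (Nat.choose_pos hmp).ne'
  simp [surpriseVal, hpos]

lemma surpriseVal_zero_zero (hmp : m ≤ p) : surpriseVal p m 0 0 = 1 := by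
  have hpos : (p.choose m : ℚ) ≠ 0 := by exact_mod_cast (Nat.choose_pos hmp).ne'
  rw [surpriseVal, sum_eq_single_of_mem 0 (by simp), div_eq_one_iff_eq hpos]
  · simp
  · intro i _ hi
    simp [Nat.choose_eq_zero_of_lt (Nat.pos_of_ne_zero hi)]

lemma surpriseVal_one_one (hm : 1 ≤ m) :
    surpriseVal p m 1 1 = (p - 1).choose (m - 1) / p.choose m := by
  rw [surpriseVal, sum_eq_single_of_mem 1 (by simpa using hm)]
  · simp
  · intro i hi hne
    have : 1 < i := lt_of_le_of_ne (mem_Icc.1 hi).1 (Ne.symm hne)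
    simp [Nat.choose_eq_zero_of_lt this]

lemma surpriseVal_one_one_lt_one (hm : 1 ≤ m) (hmp : m < p) : surpriseVal p m 1 1 < 1 := by
  rw [surpriseVal_one_one hm, div_lt_one (by exact_mod_cast Nat.choose_pos hmp.le)]
  obtain ⟨m, rfl⟩ := Nat.exists_eq_add_of_le' hm
  obtain ⟨q, rfl⟩ : ∃ q, p = q + 1 := ⟨p - 1, by omega⟩
  simp only [Nat.add_sub_cancel]
  have hpascal := Nat.choose_succ_succ' q m
  have hpos := Nat.choose_pos (show m + 1 ≤ q by omega)
  exact_mod_cast (by omega : q.choose m < (q + 1).choose (m + 1))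

end SurpriseValue

namespace Finpartition

lemma parts_eq_singleton_of_card_parts_eq_one {α : Type*} [Lattice α] [OrderBot α] {a : α}
    (P : Finpartition a) (h : #P.parts = 1) : P.parts = {a} := by
  obtain ⟨b, hb⟩ := card_eq_one.1 h
  have hba : b = a := by simpa [hb] using P.sup_parts
  rw [hb, hba]

lemma card_eq_one_of_card_parts_eq_card {α : Type*} [DecidableEq α] {s t : Finset α}
    (P : Finpartition s) (h : #P.parts = #s) (ht : t ∈ P.parts) : #t = 1 := by
  have hpos : ∀ u ∈ P.parts, 1 ≤ #u := fun u hu ↦ card_pos.2 (P.nonempty_of_mem_parts hu)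
  have hsum : ∑ u ∈ P.parts, 1 = ∑ u ∈ P.parts, #u := by
    rw [P.sum_card_parts, sum_const, smul_eq_mul, mul_one, h]
  exact ((sum_eq_sum_iff_of_le hpos).1 hsum t ht).symm

end Finpartition

lemma numEdges_le_choose_two {W : Type*} [Fintype W] (G : SimpleGraph W) :
    numEdges G ≤ (Fintype.card W).choose 2 := by
  classical
  exact card_edgeFinset_le_card_choose_two

lemma numEdges_lt_choose_two_of_ne_top {W : Type*} [Fintype W] {G : SimpleGraph W} (h : G ≠ ⊤) :
    numEdges G < (Fintype.card W).choose 2 := by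
  classical
  rw [numEdges, ← card_edgeFinset_top_eq_card_choose_two]
  exact card_lt_card (edgeFinset_ssubset_edgeFinset.2 (lt_top_iff_ne_top.2 h))

section Clustering

variable (G : SimpleGraph V)

lemma surprise_eq_one_of_card_parts_eq_one {ζ : Finpartition (univ : Finset V)}
    (h : #ζ.parts = 1) : surprise G ζ = 1 := by
  classical
  have hparts := ζ.parts_eq_singleton_of_card_parts_eq_one h
  have hpairs : intraPairs ζ = (Fintype.card V).choose 2 := by
    simp [intraPairs, hparts]
  have hedges : intraEdges G ζ = numEdges G := by
    rw [intraEdges, numEdges, filter_true_of_mem]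
    simp [hparts]
  rw [surprise, hpairs, hedges, surpriseVal_self (numEdges_le_choose_two G)]

lemma surprise_eq_one_of_card_parts_eq_card {ζ : Finpartition (univ : Finset V)}
    (h : #ζ.parts = Fintype.card V) : surprise G ζ = 1 := by
  classical
  have hsingle : ∀ P ∈ ζ.parts, #P = 1 := fun P ↦ ζ.card_eq_one_of_card_parts_eq_card h
  have hpairs : intraPairs ζ = 0 := sum_eq_zero fun P hP ↦ by simp [hsingle P hP]
  have hedges : intraEdges G ζ = 0 := by
    rw [intraEdges, card_eq_zero, filter_eq_empty_iff]
    intro e he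
    induction e with | _ u v => ?_
    rintro ⟨P, hP, huv⟩
    obtain ⟨w, rfl⟩ := card_eq_one.1 (hsingle P hP)
    have hu := huv u (Sym2.mem_mk_left u v)
    have hv := huv v (Sym2.mem_mk_right u v)
    rw [mem_singleton] at hu hv
    exact (mem_edgeFinset.1 he).ne (hu.trans hv.symm)
  rw [surprise, hpairs, hedges, surpriseVal_zero_zero (numEdges_le_choose_two G)]

def pairClustering (a b : V) : Finpartition (univ : Finset V) :=
  (⊥ : Finpartition (univ \ {a, b})).extend (by simp) disjoint_sdiff_self_left
    (sdiff_sup_cancel (subset_univ _))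

lemma mem_pairClustering_parts {a b : V} {P : Finset V} :
    P ∈ (pairClustering a b).parts ↔ P = {a, b} ∨ ∃ v ∉ ({a, b} : Finset V), {v} = P := by
  simp [pairClustering]

lemma intraPairs_pairClustering {a b : V} (hab : a ≠ b) :
    intraPairs (pairClustering a b) = 1 := by
  have hnotMem : {a, b} ∉ (⊥ : Finpartition (univ \ {a, b})).parts := fun h ↦ by
    simpa using Finpartition.le _ h (mem_insert_self a {b})
  rw [intraPairs, pairClustering, Finpartition.extend_parts, sum_insert hnotMem,
    sum_eq_zero fun P hP ↦ ?_]
  · simp [card_pair hab]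
  · obtain ⟨v, -, rfl⟩ := Finpartition.mem_bot_iff.1 hP
    simp

lemma intraEdges_pairClustering {a b : V} (hab : G.Adj a b) :
    intraEdges G (pairClustering a b) = 1 := by
  classical
  suffices h :
      {e ∈ G.edgeFinset | ∃ P ∈ (pairClustering a b).parts, ∀ v ∈ e, v ∈ P} = {s(a, b)} by
    rw [intraEdges, h, card_singleton]
  ext e
  induction e with | _ u v => ?_
  simp only [mem_filter, mem_singleton, mem_edgeFinset, mem_edgeSet, Sym2.mem_iff,
    forall_eq_or_imp, forall_eq, mem_pairClustering_parts]
  constructor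
  · rintro ⟨huv, P, rfl | ⟨w, -, rfl⟩, hu, hv⟩
    · simp only [mem_insert, mem_singleton] at hu hv
      rcases hu with rfl | rfl <;> rcases hv with rfl | rfl <;> simp_all [Sym2.eq_swap]
    · simp only [mem_singleton] at hu hv
      exact absurd (hu.trans hv.symm) huv.ne
  · intro h
    rcases Sym2.eq_iff.1 h with ⟨rfl, rfl⟩ | ⟨rfl, rfl⟩
    · exact ⟨hab, _, Or.inl rfl, by simp⟩
    · exact ⟨hab.symm, _, Or.inl rfl, by simp⟩

lemma surprise_pairClustering_lt_one {a b : V} (hab : G.Adj a b) (hG : G ≠ ⊤) :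
    surprise G (pairClustering a b) < 1 := by
  have hm : 1 ≤ numEdges G := by
    classical
    exact card_pos.2 ⟨s(a, b), mem_edgeFinset.2 hab⟩
  rw [surprise, intraPairs_pairClustering hab.ne, intraEdges_pairClustering G hab]
  exact surpriseVal_one_one_lt_one hm (numEdges_lt_choose_two_of_ne_top hG)

end Clustering

/-- A surprise-optimal clustering `ζ` of a graph with at least one edge that is not
complete has more than one and fewer than `n` clusters. -/
theorem stmt8 (G : SimpleGraph V) (hE : G.edgeSet.Nonempty) (hnc : G ≠ ⊤)
    (ζ : Finpartition (univ : Finset V))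
    (hopt : ∀ ζ' : Finpartition (univ : Finset V), surprise G ζ ≤ surprise G ζ') :
    1 < ζ.parts.card ∧ ζ.parts.card < Fintype.card V := by
  obtain ⟨a, b, hab⟩ := ne_bot_iff_exists_adj.1 (edgeSet_nonempty.1 hE)
  have hlt : surprise G ζ < 1 := (hopt _).trans_lt (surprise_pairClustering_lt_one G hab hnc)
  have hpos : 0 < #ζ.parts := card_pos.2 (ζ.parts_nonempty (univ_nonempty_iff.2 ⟨a⟩).ne_empty)
  refine ⟨lt_of_le_of_ne hpos fun h ↦ ?_, lt_of_le_of_ne ζ.card_parts_le_card fun h ↦ ?_⟩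
  · exact hlt.ne (surprise_eq_one_of_card_parts_eq_one G h.symm)
  · exact hlt.ne (surprise_eq_one_of_card_parts_eq_card G (h.trans card_univ))
end

section
/- Let G be a finite simple graph that has at least one edge and is not a complete graph, and let ζ be a surprise-optimal clustering of G. Then i_e(ζ) ≥ i_e(ζ') for every clustering ζ' of G all of whose clusters induce complete subgraphs (cliques) of G. -/
open Finset

variable {V : Type*} [Fintype V] [DecidableEq V]

/-!
If a clustering into cliques has `k` intracluster edges, then `i_p = i_e = k` and only the
term `i = k` of its surprise sum survives, leaving `C(p - k, m - k) / C(p, m)`. Any clustering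
with `i_e ≤ i_p` has numerator at least `C(p - i_e, m - i_e)`: by Vandermonde this equals
`∑ C(i_p - i_e, i - i_e) C(p - i_p, m - i)`, and termwise `C(i_p - i_e, i - i_e) ≤ C(i_p, i)`.
As `m < p` for a non-complete graph, `C(p - k, m - k)` is strictly decreasing in `k ≤ m`, so a
clustering with fewer intracluster edges than a clique clustering has strictly larger surprise.
-/

def surpriseNumerator (p m ip ie : ℕ) : ℕ :=
  ∑ i ∈ Icc ie m, ip.choose i * (p - ip).choose (m - i)

lemma surpriseVal_eq_div (p m ip ie : ℕ) :
    surpriseVal p m ip ie = surpriseNumerator p m ip ie / p.choose m := by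
  simp [surpriseVal, surpriseNumerator]

lemma surpriseNumerator_self {p m k : ℕ} (hkm : k ≤ m) :
    surpriseNumerator p m k k = (p - k).choose (m - k) := by
  rw [surpriseNumerator, sum_eq_single_of_mem k (by simp [hkm])]
  · simp
  · intro i hi hik
    rw [Nat.choose_eq_zero_of_lt (lt_of_le_of_ne (mem_Icc.mp hi).1 (Ne.symm hik)), zero_mul]

lemma choose_le_choose_add_add (n j k : ℕ) : n.choose j ≤ (n + k).choose (j + k) := by
  induction k with
  | zero => rfl
  | succ k ih =>
    rw [← add_assoc, ← add_assoc, Nat.choose_succ_succ']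
    exact ih.trans (Nat.le_add_right _ _)

lemma choose_sub_sub_le_surpriseNumerator {p m a k : ℕ} (hka : k ≤ a) (hap : a ≤ p)
    (hkm : k ≤ m) : (p - k).choose (m - k) ≤ surpriseNumerator p m a k := by
  obtain ⟨b, rfl⟩ := Nat.exists_eq_add_of_le hka
  obtain ⟨c, rfl⟩ := Nat.exists_eq_add_of_le hkm
  obtain ⟨d, rfl⟩ := Nat.exists_eq_add_of_le hap
  calc (k + b + d - k).choose (k + c - k)
      = (b + d).choose c := by congr 1 <;> omega
    _ = ∑ j ∈ range (c + 1), b.choose j * d.choose (c - j) := by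
      rw [Nat.add_choose_eq,
        Nat.sum_antidiagonal_eq_sum_range_succ fun i j => b.choose i * d.choose j]
    _ ≤ ∑ j ∈ range (c + 1), (k + b).choose (k + j) * d.choose (c - j) := by
      gcongr with j
      rw [add_comm k b, add_comm k j]
      exact choose_le_choose_add_add b j k
    _ = surpriseNumerator (k + b + d) (k + c) (k + b) k := by
      rw [surpriseNumerator, ← Ico_add_one_right_eq_Icc, sum_Ico_eq_sum_range,
        show k + c + 1 - k = c + 1 by omega]
      refine sum_congr rfl fun j _ => ?_
      congr 2 <;> omega

lemma strictMono_choose_add_self {n : ℕ} (hn : 0 < n) : StrictMono fun r => (n + r).choose r :=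
  strictMono_nat_of_lt_succ fun r => by
    rw [← add_assoc, Nat.choose_succ_succ']
    exact Nat.lt_add_of_pos_right (Nat.choose_pos (by omega))

lemma choose_sub_sub_lt_choose_sub_sub {p m j k : ℕ} (hjk : j < k) (hkm : k ≤ m) (hmp : m < p) :
    (p - k).choose (m - k) < (p - j).choose (m - j) := by
  have h : (p - m + (m - k)).choose (m - k) < (p - m + (m - j)).choose (m - j) :=
    strictMono_choose_add_self (by omega) (by omega)
  convert h using 2 <;> omega

theorem surpriseVal_self_lt_of_lt {p m k ip ie : ℕ} (hmp : m < p) (hkm : k ≤ m) (hie : ie < k)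
    (hieip : ie ≤ ip) (hip : ip ≤ p) :
    surpriseVal p m k k < surpriseVal p m ip ie := by
  have hden : (0 : ℚ) < p.choose m := by exact_mod_cast Nat.choose_pos hmp.le
  rw [surpriseVal_eq_div, surpriseVal_eq_div, div_lt_div_iff_of_pos_right hden, Nat.cast_lt,
    surpriseNumerator_self hkm]
  exact (choose_sub_sub_lt_choose_sub_sub hie hkm hmp).trans_le
    (choose_sub_sub_le_surpriseNumerator hieip hip (by omega))

def intraPairFinset (ζ : Finpartition (univ : Finset V)) : Finset (Sym2 V) :=
  ζ.parts.biUnion fun P => P.offDiag.image Sym2.mk.uncurry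

lemma mem_intraPairFinset {ζ : Finpartition (univ : Finset V)} {e : Sym2 V} :
    e ∈ intraPairFinset ζ ↔ ¬ e.IsDiag ∧ ∃ P ∈ ζ.parts, ∀ v ∈ e, v ∈ P := by
  induction e using Sym2.ind with
  | _ u w =>
    simp only [intraPairFinset, mem_biUnion, mem_image, mem_offDiag, Prod.exists,
      Function.uncurry_apply_pair, Sym2.eq_iff, Sym2.mem_iff, Sym2.mk_isDiag_iff]
    constructor
    · rintro ⟨P, hP, a, b, ⟨ha, hb, hab⟩, ⟨rfl, rfl⟩ | ⟨rfl, rfl⟩⟩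
      · exact ⟨hab, P, hP, by rintro v (rfl | rfl) <;> assumption⟩
      · exact ⟨Ne.symm hab, P, hP, by rintro v (rfl | rfl) <;> assumption⟩
    · rintro ⟨huw, P, hP, h⟩
      exact ⟨P, hP, u, w, ⟨h u (.inl rfl), h w (.inr rfl), huw⟩, .inl ⟨rfl, rfl⟩⟩

lemma card_intraPairFinset (ζ : Finpartition (univ : Finset V)) :
    #(intraPairFinset ζ) = intraPairs ζ := by
  rw [intraPairFinset, card_biUnion]
  · exact sum_congr rfl fun P _ => Sym2.card_image_offDiag P
  · intro P hP Q hQ hPQ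
    refine disjoint_left.mpr fun e heP heQ => ?_
    obtain ⟨⟨u, w⟩, huw, rfl⟩ := mem_image.mp heP
    obtain ⟨⟨u', w'⟩, huw', hu'w'⟩ := mem_image.mp heQ
    have hu : u ∈ Q := by
      rcases Sym2.eq_iff.mp hu'w' with ⟨rfl, -⟩ | ⟨-, rfl⟩
      exacts [(mem_offDiag.mp huw').1, (mem_offDiag.mp huw').2.1]
    exact disjoint_left.mp (ζ.disjoint hP hQ hPQ) (mem_offDiag.mp huw).1 hu

lemma intraPairs_le_choose_two (ζ : Finpartition (univ : Finset V)) :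
    intraPairs ζ ≤ (Fintype.card V).choose 2 := by
  rw [← card_intraPairFinset, ← card_univ, ← Sym2.card_image_offDiag]
  exact card_le_card <| biUnion_subset.mpr fun P _ =>
    image_subset_image (offDiag_mono (subset_univ P))

lemma intraEdges_le_intraPairs (G : SimpleGraph V) (ζ : Finpartition (univ : Finset V)) :
    intraEdges G ζ ≤ intraPairs ζ := by
  classical
  rw [intraEdges, ← card_intraPairFinset]
  refine card_le_card fun e he => ?_
  obtain ⟨heG, hζ⟩ := mem_filter.mp he
  exact mem_intraPairFinset.mpr ⟨G.not_isDiag_of_mem_edgeSet (G.mem_edgeFinset.mp heG), hζ⟩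

lemma intraEdges_eq_intraPairs_of_isClique {G : SimpleGraph V}
    {ζ : Finpartition (univ : Finset V)} (hclique : ∀ P ∈ ζ.parts, G.IsClique (P : Set V)) :
    intraEdges G ζ = intraPairs ζ := by
  classical
  refine (intraEdges_le_intraPairs G ζ).antisymm ?_
  rw [intraEdges, ← card_intraPairFinset]
  refine card_le_card fun e he => ?_
  obtain ⟨hdiag, P, hP, hmem⟩ := mem_intraPairFinset.mp he
  induction e using Sym2.ind with
  | _ u w =>
    refine mem_filter.mpr ⟨G.mem_edgeFinset.mpr ?_, P, hP, hmem⟩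
    exact hclique P hP (hmem u (Sym2.mem_mk_left u w)) (hmem w (Sym2.mem_mk_right u w))
      (Sym2.mk_isDiag_iff.not.mp hdiag)

lemma intraEdges_le_numEdges (G : SimpleGraph V) (ζ : Finpartition (univ : Finset V)) :
    intraEdges G ζ ≤ numEdges G :=
  card_filter_le _ _

lemma numEdges_lt_choose_two {G : SimpleGraph V} (hG : G ≠ ⊤) :
    numEdges G < (Fintype.card V).choose 2 := by
  classical
  rw [numEdges, ← SimpleGraph.card_edgeFinset_top_eq_card_choose_two]
  exact card_lt_card (SimpleGraph.edgeFinset_ssubset_edgeFinset.mpr (lt_top_iff_ne_top.mpr hG))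

theorem stmt9_general (G : SimpleGraph V) (hnc : G ≠ ⊤)
    (ζ : Finpartition (univ : Finset V))
    (hopt : ∀ ζ'' : Finpartition (univ : Finset V), surprise G ζ ≤ surprise G ζ'')
    (ζ' : Finpartition (univ : Finset V))
    (hclique : ∀ P ∈ ζ'.parts, G.IsClique (P : Set V)) :
    intraEdges G ζ' ≤ intraEdges G ζ := by
  by_contra! hfewer
  have hk := intraEdges_eq_intraPairs_of_isClique hclique
  have hkm := intraEdges_le_numEdges G ζ'
  rw [hk] at hfewer hkm
  refine (hopt ζ').not_gt ?_
  rw [surprise, surprise, hk]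
  exact surpriseVal_self_lt_of_lt (numEdges_lt_choose_two hnc) hkm hfewer
    (intraEdges_le_intraPairs G ζ) (intraPairs_le_choose_two ζ)

/-- A surprise-optimal clustering `ζ` of a graph with at least one edge that is not
complete has at least as many intracluster edges as any clustering into cliques. -/
theorem stmt9 (G : SimpleGraph V) (hE : G.edgeSet.Nonempty) (hnc : G ≠ ⊤)
    (ζ : Finpartition (univ : Finset V))
    (hopt : ∀ ζ'' : Finpartition (univ : Finset V), surprise G ζ ≤ surprise G ζ'')
    (ζ' : Finpartition (univ : Finset V))
    (hclique : ∀ P ∈ ζ'.parts, G.IsClique (P : Set V)) :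
    intraEdges G ζ' ≤ intraEdges G ζ :=
  stmt9_general G hnc ζ hopt ζ' hclique
end
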